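/- For m ≥ 1 and n ≥ 2, the second entry of the n-th row of the m-th order Eulerian triangle equals T^(m)_{n,1} = m·(2^n - n - 1). -/

import Mathlib

/-! Since `T_{n,0} = 1`, the recurrence at `k = 1` reads `T_{n+1,1} = 2 T_{n,1} + m n`,
whose solution with `T_{1,1} = 0` is `m (2^n - n - 1)`. -/

/-- The `m`th-order Eulerian numbers `T^(m)_{n,k}`, with integer descent index `k`
(so `T^(m)_{n,k} = 0` for `k < 0` or `k ≥ n`). -/
def eulerianT (m : ℕ) : ℕ → ℤ → ℤ
  | 0, _ => 0
  | 1, k => if k = 0 then 1 else 0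
  | n + 2, k =>
      if k < 0 ∨ (n : ℤ) + 2 ≤ k then 0
      else (k + 1) * eulerianT m (n + 1) k +
        ((m : ℤ) * ((n : ℤ) + 2) - k - (m : ℤ) + 1) * eulerianT m (n + 1) (k - 1)

lemma eulerianT_of_neg (m n : ℕ) {k : ℤ} (hk : k < 0) : eulerianT m n k = 0 := by
  match n with
  | 0 => rfl
  | 1 => simp [eulerianT, hk.ne]
  | n + 2 => simp [eulerianT, hk]

lemma eulerianT_add_two (m n : ℕ) {k : ℤ} (hk₀ : 0 ≤ k) (hk : k < n + 2) :
    eulerianT m (n + 2) k = (k + 1) * eulerianT m (n + 1) k +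
      ((m : ℤ) * ((n : ℤ) + 2) - k - (m : ℤ) + 1) * eulerianT m (n + 1) (k - 1) := by
  rw [eulerianT, if_neg (by omega)]

lemma eulerianT_zero_right (m : ℕ) : ∀ {n : ℕ}, 1 ≤ n → eulerianT m n 0 = 1
  | 1, _ => rfl
  | n + 2, _ => by
    rw [eulerianT_add_two m n le_rfl (by omega), eulerianT_zero_right m (by omega),
      eulerianT_of_neg m _ (by norm_num : (0 - 1 : ℤ) < 0)]
    ring

theorem eulerianT_second_entry_general (m n : ℕ) :
    eulerianT m n 1 = (m : ℤ) * (2 ^ n - (n : ℤ) - 1) := by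
  induction n using Nat.twoStepInduction with
  | zero => simp [eulerianT]
  | one => simp [eulerianT]
  | more n _ ih =>
    rw [eulerianT_add_two m n zero_le_one (by omega), ih, sub_self,
      eulerianT_zero_right m n.succ_pos]
    push_cast
    ring

theorem eulerianT_second_entry (m n : ℕ) (hm : 1 ≤ m) (hn : 2 ≤ n) :
    eulerianT m n 1 = (m : ℤ) * (2 ^ n - (n : ℤ) - 1) :=
  eulerianT_second_entry_general m n
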